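/- Every bi-immune sequence is absolutely undecidable: if A : ℕ → Bool is bi-immune, then there is no partial computable function φ : ℕ →. Bool whose domain has positive upper density and which A extends. -/

import Mathlib

/-- The upper density of a set of naturals:
`ρ(D) = limsup_{n→∞} |D ∩ {0,…,n−1}| / n`. -/
noncomputable def upperDensity (D : Set ℕ) : ℝ :=
  Filter.limsup (fun n => (Nat.card (D ∩ Set.Iio n : Set ℕ) : ℝ) / n) Filter.atTop

/-- A sequence `A : ℕ → Bool` extends a partial function `φ : ℕ →. Bool`
if `A m = φ m` for every `m` in the domain of `φ`. -/
def SeqExtends (A : ℕ → Bool) (φ : ℕ →. Bool) : Prop :=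
  ∀ m, ∀ b ∈ φ m, A m = b

/-- A sequence `A : ℕ → Bool` is bi-immune if no infinite computable set is
contained in `{n | A n = true}` or in `{n | A n = false}`. -/
def BiImmune (A : ℕ → Bool) : Prop :=
  ¬ ∃ D : Set ℕ, D.Infinite ∧ ComputablePred (· ∈ D) ∧
      (D ⊆ {n | A n = true} ∨ D ⊆ {n | A n = false})

/-!
The domain `D` of a partial computable `φ` is recursively enumerable, and if it has positive upper
density it is infinite. Dovetailing the computation of `φ` finds, for each `m`, some element of `D`
above `m`; iterating this search enumerates an infinite subset of `D` in increasing order, and the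
range of a strictly increasing computable function is decidable. On this decidable set `φ` is a
total computable function, so it splits into the two decidable sets where `φ` takes the values
`true` and `false`, one of which is infinite. If `A` extended `φ`, that set would contradict the
bi-immunity of `A`.
-/

theorem Set.Infinite.of_upperDensity_pos {D : Set ℕ} (h : 0 < upperDensity D) : D.Infinite := by
  intro hfin
  have hzero : Filter.Tendsto (fun n : ℕ => (Nat.card (D ∩ Set.Iio n : Set ℕ) : ℝ) / n)
      Filter.atTop (nhds 0) := by
    refine tendsto_of_tendsto_of_tendsto_of_le_of_le tendsto_const_nhds
      (tendsto_const_div_atTop_nhds_zero_nat (Nat.card D : ℝ)) (fun n => by positivity)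
      fun n => ?_
    gcongr
    exact Nat.card_mono hfin Set.inter_subset_left
  rw [upperDensity, hzero.limsup_eq] at h
  exact h.false

theorem ComputablePred.and {α : Type*} [Primcodable α] {p q : α → Prop}
    (hp : ComputablePred p) (hq : ComputablePred q) : ComputablePred fun a => p a ∧ q a := by
  classical
  exact ((Primrec.and.to_comp.comp hp.decide hq.decide).of_eq fun a => by simp).computablePred

theorem Computable.iterate {σ : Type*} [Primcodable σ] {F : σ → σ} (hF : Computable F) (a : σ) :
    Computable fun n => F^[n] a :=
  (Computable.nat_rec Computable.id (Computable.const a)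
    (hF.comp (Computable.snd.comp Computable.snd)).to₂).of_eq fun n => by
      induction n with
      | zero => rfl
      | succ n ih => simp [Function.iterate_succ_apply', ← ih]

theorem REPred.exists_primrec₂_iff_exists {p : ℕ → Prop} (hp : REPred p) :
    ∃ t : ℕ → ℕ → Bool, Primrec₂ t ∧ ∀ n, p n ↔ ∃ k, t n k = true := by
  obtain ⟨c, hc⟩ := Nat.Partrec.Code.exists_code.1
    (Partrec.nat_iff.1 (hp.map (Computable.const 0).to₂))
  refine ⟨fun n k => (c.evaln k n).isSome,
    Primrec.option_isSome.comp (Nat.Partrec.Code.primrec_evaln.comp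
      ((Primrec.snd.pair (Primrec.const c)).pair Primrec.fst)), fun n => ?_⟩
  have hdom : p n ↔ (c.eval n).Dom := by
    simpa [hc] using ⟨fun h => ⟨h, trivial⟩, fun h => h.1⟩
  simp only [hdom, Part.dom_iff_mem, Nat.Partrec.Code.evaln_complete, Option.isSome_iff_exists]
  exact exists_comm

theorem REPred.exists_computable_lt_and {p : ℕ → Prop} (hp : REPred p)
    (hinf : {n | p n}.Infinite) : ∃ F : ℕ → ℕ, Computable F ∧ ∀ m, m < F m ∧ p (F m) := by
  obtain ⟨t, ht, hpt⟩ := hp.exists_primrec₂_iff_exists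
  -- `q` encodes a candidate `q.unpair.2` together with a step bound `q.unpair.1` for it
  let found : ℕ → ℕ → Bool := fun m q => decide (m < q.unpair.2) && t q.unpair.2 q.unpair.1
  have hfound : Computable₂ found :=
    (Primrec.and.comp (Primrec.nat_lt.decide.comp Primrec.fst
      (Primrec.snd.comp (Primrec.unpair.comp Primrec.snd)))
      (ht.comp (Primrec.snd.comp (Primrec.unpair.comp Primrec.snd))
        (Primrec.fst.comp (Primrec.unpair.comp Primrec.snd)))).to_comp.to₂
  have hex : ∀ m, ∃ q, found m q = true := fun m => by
    obtain ⟨n, hn, hmn⟩ := hinf.exists_gt m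
    obtain ⟨k, hk⟩ := (hpt n).1 hn
    exact ⟨Nat.pair k n, by simp [found, hmn, hk]⟩
  refine ⟨fun m => (Nat.find (hex m)).unpair.2,
    (Primrec.snd.comp Primrec.unpair).to_comp.comp
      (Computable.find (ComputablePred.computable_iff.2 ⟨_, hfound, rfl⟩) hex), fun m => ?_⟩
  have hspec : found m (Nat.find (hex m)) = true := Nat.find_spec (hex m)
  beta_reduce
  generalize Nat.find (hex m) = q at hspec ⊢
  simp only [found, Bool.and_eq_true, decide_eq_true_eq] at hspec
  exact ⟨hspec.1, (hpt _).2 ⟨_, hspec.2⟩⟩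

theorem Computable.computablePred_mem_range {g : ℕ → ℕ} (hg : Computable g)
    (hmono : StrictMono g) : ComputablePred (· ∈ Set.range g) := by
  classical
  have hex : ∀ n, ∃ k, n ≤ g k := fun n => ⟨n, hmono.le_apply⟩
  have hK : Computable fun n => Nat.find (hex n) :=
    Computable.find (Primrec.nat_le.decide.to_comp.comp Computable.fst
      (hg.comp Computable.snd)).computablePred hex
  refine (Primrec.eq.decide.to_comp.comp (hg.comp hK) Computable.id).computablePred.of_eq
    fun n => ⟨fun h => ⟨_, h⟩, ?_⟩
  rintro ⟨j, rfl⟩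
  exact le_antisymm (hmono.monotone (Nat.find_min' _ le_rfl)) (Nat.find_spec (hex (g j)))

theorem REPred.exists_infinite_computablePred_subset {p : ℕ → Prop} (hp : REPred p)
    (hinf : {n | p n}.Infinite) :
    ∃ D ⊆ {n | p n}, D.Infinite ∧ ComputablePred (· ∈ D) := by
  obtain ⟨F, hF, hFp⟩ := hp.exists_computable_lt_and hinf
  have hmono : StrictMono fun n => F (F^[n] 0) := strictMono_nat_of_lt_succ fun n => by
    simpa only [Function.iterate_succ_apply'] using (hFp _).1
  refine ⟨Set.range fun n => F (F^[n] 0), ?_, Set.infinite_range_of_injective hmono.injective,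
    (hF.comp (hF.iterate 0)).computablePred_mem_range hmono⟩
  rintro _ ⟨n, rfl⟩
  exact (hFp _).2

theorem Partrec.exists_computable_mem_of_subset_dom {α σ : Type*} [Primcodable α] [Primcodable σ]
    [Inhabited σ] {φ : α →. σ} (hφ : Partrec φ) {D : Set α} (hD : ComputablePred (· ∈ D))
    (hDφ : D ⊆ φ.Dom) : ∃ v : α → σ, Computable v ∧ ∀ a ∈ D, v a ∈ φ a := by
  classical
  let θ : α →. σ := fun a => bif decide (a ∈ D) then φ a else Part.some default
  have hθ : ∀ a, (θ a).Dom := fun a => by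
    by_cases ha : a ∈ D
    · simp only [θ, ha, decide_true, cond_true]
      exact hDφ ha
    · simp [θ, ha]
  refine ⟨fun a => (θ a).get (hθ a),
    (Partrec.cond hD.decide hφ (Computable.const default).partrec).of_eq_tot fun a => Part.get_mem (hθ a), fun a ha => ?_⟩
  simpa [θ, ha] using Part.get_mem (hθ a)

/-- Every bi-immune sequence is absolutely undecidable: it extends no partial
computable function whose domain has positive upper density. -/
theorem biImmune_absolutelyUndecidable (A : ℕ → Bool) (hA : BiImmune A) :
    ¬ ∃ φ : ℕ →. Bool, Partrec φ ∧ 0 < upperDensity φ.Dom ∧ SeqExtends A φ := by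
  rintro ⟨φ, hφ, hdens, hext⟩
  obtain ⟨D, hDφ, hDinf, hD⟩ :=
    hφ.dom_re.exists_infinite_computablePred_subset (Set.Infinite.of_upperDensity_pos hdens)
  obtain ⟨v, hv, hvφ⟩ := hφ.exists_computable_mem_of_subset_dom hD hDφ
  let fiber (b : Bool) : Set ℕ := {n | n ∈ D ∧ v n = b}
  have hfiber (b : Bool) : ComputablePred (· ∈ fiber b) :=
    hD.and (Primrec.eq.decide.to_comp.comp hv (Computable.const b)).computablePred
  have hfiberA (b : Bool) : fiber b ⊆ {n | A n = b} := fun n ⟨hn, hvn⟩ =>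
    hvn ▸ hext n (v n) (hvφ n hn)
  have hD_eq : D = fiber true ∪ fiber false := by
    ext n
    simp only [fiber, Set.mem_union, Set.mem_ofPred_eq, ← and_or_left]
    cases v n <;> simp
  rcases Set.infinite_union.1 (hD_eq ▸ hDinf) with h | h
  · exact hA ⟨_, h, hfiber true, Or.inl (hfiberA true)⟩
  · exact hA ⟨_, h, hfiber false, Or.inr (hfiberA false)⟩
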